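/- arXiv:math/9303207 — 3 statements merged into one kernel-verified Lean document; each statement's English description precedes it below -/
import Mathlib

section
/- Let F be a filter on ℕ containing every cofinite set with ∅ ∉ F, and let I = {A ⊆ ℕ : ℕ \ A ∈ F} be its dual ideal. Assume F is a P-filter and F satisfies ccc. Then I is fat: for every sequence (A_n)_{n∈ℕ} of sets in I such that min A_n → ∞ (i.e., for every k the set {n : A_n ∩ {0,…,k} ≠ ∅} is finite), there exists an infinite set Z ⊆ ℕ such that ⋃_{n∈Z} A_n ∈ I. -/
private def fatCode (x : ℕ → Bool) (n : ℕ) : ℕ := Encodable.encode ((List.range n).map x)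

private lemma fatCode_eq {x y : ℕ → Bool} {n k : ℕ} (h : fatCode x n = fatCode y k) :
    n = k ∧ ∀ i < n, x i = y i := by
  have hl : (List.range n).map x = (List.range k).map y := Encodable.encode_injective h
  have hn : n = k := by
    have := congrArg List.length hl
    simpa using this
  subst hn
  refine ⟨rfl, fun i hi => ?_⟩
  have := List.map_eq_map_iff.mp hl i (List.mem_range.mpr hi)
  exact this

private lemma not_countable_nat_bool : ¬ Countable (ℕ → Bool) := by
  intro h
  obtain ⟨g, hg⟩ := countable_iff_exists_surjective.mp h
  obtain ⟨m, hm⟩ := hg (fun n => !(g n n))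
  have := congrFun hm m
  simp at this

/-- if `F` is a ccc P-filter on `ℕ` extending the cofinite filter with
`∅ ∉ F`, then its dual ideal `I = {A | Aᶜ ∈ F}` is fat: for every sequence `(A n)`
of members of `I` with `min Aₙ → ∞` there is an infinite `Z` with `⋃_{n ∈ Z} A n ∈ I`. -/
theorem dual_ideal_of_ccc_P_filter_is_fat (F : Filter ℕ)
    (hcof : Filter.cofinite ≤ F) (hbot : (∅ : Set ℕ) ∉ F)
    (hP : ∀ A : ℕ → Set ℕ, (∀ n, (A n)ᶜ ∈ F) →
      ∃ B : Set ℕ, Bᶜ ∈ F ∧ ∀ n, (A n \ B).Finite)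
    (hccc : ∀ 𝒮 : Set (Set ℕ), (∀ S ∈ 𝒮, Sᶜ ∉ F) →
      (∀ S ∈ 𝒮, ∀ S' ∈ 𝒮, S ≠ S' → (S ∩ S')ᶜ ∈ F) → 𝒮.Countable)
    (A : ℕ → Set ℕ) (hA : ∀ n, (A n)ᶜ ∈ F)
    (hmin : ∀ k : ℕ, {n : ℕ | (A n ∩ Set.Iic k).Nonempty}.Finite) :
    ∃ Z : Set ℕ, Z.Infinite ∧ (⋃ n ∈ Z, A n)ᶜ ∈ F := by
  classical
  obtain ⟨B, hB, hfin⟩ := hP A hA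
  by_cases hE : {n | A n \ B = ∅}.Infinite
  · -- trivial case: infinitely many A n ⊆ B
    refine ⟨_, hE, Filter.mem_of_superset hB ?_⟩
    intro p hp
    simp only [Set.mem_compl_iff, Set.mem_iUnion] at *
    rintro ⟨n, hn, hpA⟩
    have : p ∈ B := by
      have : p ∉ A n \ B := by rw [hn]; exact Set.notMem_empty p
      simp only [Set.mem_diff, not_and, not_not] at this
      exact this hpA
    exact hp this
  rw [Set.not_infinite] at hE
  -- Step: choose the next index with nonempty finite part living in a fresh interval
  have hstep : ∀ s : ℕ × ℕ, ∃ s' : ℕ × ℕ, s.1 < s'.1 ∧ (A s'.1 \ B).Nonempty ∧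
      A s'.1 \ B ⊆ Set.Ioc s.2 s'.2 := by
    intro s
    have hBad : ({m | (A m ∩ Set.Iic s.2).Nonempty} ∪ {m | A m \ B = ∅}).Finite :=
      (hmin s.2).union hE
    obtain ⟨m, hm, hms⟩ := hBad.infinite_compl.exists_gt s.1
    simp only [Set.mem_compl_iff, Set.mem_union, Set.mem_setOf_eq, not_or] at hm
    obtain ⟨hm1, hm2⟩ := hm
    obtain ⟨b', hb'⟩ := (hfin m).bddAbove
    refine ⟨(m, b'), hms, Set.nonempty_iff_ne_empty.mpr hm2, fun p hp => ?_⟩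
    refine ⟨?_, hb' hp⟩
    by_contra hps
    push_neg at hps
    exact hm1 ⟨p, hp.1, hps⟩
  choose step hs1 hs2 hs3 using hstep
  set t : ℕ → ℕ × ℕ := fun i => step^[i] (0, 0) with ht
  have hts : ∀ i, t (i + 1) = step (t i) := fun i => Function.iterate_succ_apply' step i (0, 0)
  set idx : ℕ → ℕ := fun i => (t (i + 1)).1 with hidx
  set G : ℕ → Set ℕ := fun i => A (idx i) \ B with hGdef
  have hG1 : ∀ i, (G i).Nonempty := by
    intro i; show (A ((t (i+1)).1) \ B).Nonempty; rw [hts i]; exact hs2 (t i)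
  have hGsub : ∀ i, G i ⊆ Set.Ioc (t i).2 (t (i + 1)).2 := by
    intro i; show A ((t (i+1)).1) \ B ⊆ _
    conv_lhs => rw [hts i]
    conv_rhs => rw [hts i]
    exact hs3 (t i)
  have hbmono : StrictMono (fun i => (t i).2) := by
    apply strictMono_nat_of_lt_succ
    intro i
    obtain ⟨p, hp⟩ := hG1 i
    have := hGsub i hp
    exact lt_of_lt_of_le this.1 this.2
  have hidxmono : StrictMono idx := by
    apply strictMono_nat_of_lt_succ
    intro i
    show (t (i+1)).1 < (t (i+2)).1
    rw [hts (i+1)]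
    exact hs1 (t (i + 1))
  have hGdisj : ∀ i j, i ≠ j → G i ∩ G j = ∅ := by
    have key : ∀ i j, i < j → G i ∩ G j = ∅ := by
      intro i j hij
      ext p
      simp only [Set.mem_inter_iff, Set.mem_empty_iff_false, iff_false, not_and]
      intro hpi hpj
      have h1 := (hGsub i hpi).2
      have h2 := (hGsub j hpj).1
      have : (t (i + 1)).2 ≤ (t j).2 := (hbmono.le_iff_le).mpr hij
      omega
    intro i j hij
    rcases hij.lt_or_gt with h | h
    · exact key i j h
    · rw [Set.inter_comm]; exact key j i h
  have hGfin : ∀ i, (G i).Finite := fun i => hfin (idx i)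
  set S : (ℕ → Bool) → Set ℕ := fun x => ⋃ n, G (fatCode x n) with hS
  -- almost disjointness and injectivity of S
  have hGI : ∀ j, (G j)ᶜ ∈ F := fun j =>
    Filter.mem_of_superset (hA (idx j)) (Set.compl_subset_compl.mpr Set.diff_subset)
  have hkey : ∀ x y : ℕ → Bool, x ≠ y →
      (S x ∩ S y)ᶜ ∈ F ∧ S x ≠ S y := by
    intro x y hxy
    have hex : ∃ m, x m ≠ y m := by
      by_contra hc; push_neg at hc; exact hxy (funext hc)
    set m := Nat.find hex with hm
    have hmspec : x m ≠ y m := Nat.find_spec hex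
    have hmmin : ∀ i < m, x i = y i := fun i hi => by
      by_contra hc; exact absurd (Nat.find_le hc : m ≤ i) (by omega)
    constructor
    · have hsub : S x ∩ S y ⊆ ⋃ n ∈ Set.Iic m, G (fatCode x n) := by
        rintro p ⟨hpx, hpy⟩
        simp only [hS, Set.mem_iUnion] at hpx hpy
        obtain ⟨n, hn⟩ := hpx
        obtain ⟨k, hk⟩ := hpy
        have hcode : fatCode x n = fatCode y k := by
          by_contra hc
          have := hGdisj _ _ hc
          exact absurd (Set.mem_inter hn hk) (by rw [this]; exact Set.notMem_empty p)
        obtain ⟨hnk, hagree⟩ := fatCode_eq hcode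
        have hnm : n ≤ m := by
          by_contra hc; push_neg at hc
          exact hmspec (hagree m hc)
        exact Set.mem_biUnion (Set.mem_Iic.mpr hnm) hn
      have hU : (⋃ n ∈ Set.Iic m, G (fatCode x n))ᶜ ∈ F := by
        rw [Set.compl_iUnion₂]
        exact (Filter.biInter_mem (Set.finite_Iic m)).mpr fun n _ => hGI _
      exact Filter.mem_of_superset hU (Set.compl_subset_compl.mpr hsub)
    · intro hSeq
      obtain ⟨p, hp⟩ := hG1 (fatCode x (m + 1))
      have hpx : p ∈ S x := Set.mem_iUnion.mpr ⟨m + 1, hp⟩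
      rw [hSeq] at hpx
      obtain ⟨k, hk⟩ := Set.mem_iUnion.mp hpx
      have hcode : fatCode x (m + 1) ≠ fatCode y k := by
        intro hc
        obtain ⟨hnk, hagree⟩ := fatCode_eq hc
        exact hmspec (hagree m (by omega))
      have := hGdisj _ _ hcode
      exact absurd (Set.mem_inter hp hk) (by rw [this]; exact Set.notMem_empty p)
  have hSinj : Function.Injective S := by
    intro x y hxyS
    by_contra hxy
    exact (hkey x y hxy).2 hxyS
  -- ccc: some S x is in the ideal
  have hexx : ∃ x : ℕ → Bool, (S x)ᶜ ∈ F := by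
    by_contra hno
    push_neg at hno
    have hc := hccc (Set.range S)
      (by rintro _ ⟨x, rfl⟩; exact hno x)
      (by
        rintro _ ⟨x, rfl⟩ _ ⟨y, rfl⟩ hne
        have hxy : x ≠ y := fun h => hne (by rw [h])
        exact (hkey x y hxy).1)
    have := hc.to_subtype
    have : Countable (ℕ → Bool) :=
      Countable.of_equiv _ (Equiv.ofInjective S hSinj).symm
    exact not_countable_nat_bool this
  obtain ⟨x, hx⟩ := hexx
  refine ⟨Set.range (fun n => idx (fatCode x n)), ?_, ?_⟩
  · apply Set.infinite_range_of_injective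
    intro a b hab
    have := hidxmono.injective hab
    exact (fatCode_eq this).1
  · have hsub : ⋃ n ∈ Set.range (fun n => idx (fatCode x n)), A n ⊆ B ∪ S x := by
      rintro p hp
      simp only [Set.mem_iUnion] at hp
      obtain ⟨n, ⟨k, rfl⟩, hpA⟩ := hp
      by_cases hpB : p ∈ B
      · exact Or.inl hpB
      · exact Or.inr (Set.mem_iUnion.mpr ⟨k, hpA, hpB⟩)
    refine Filter.mem_of_superset (Filter.inter_mem hB hx) ?_
    rw [← Set.compl_union]
    exact Set.compl_subset_compl.mpr hsub
end

section
/- Let (T, ≤_T) be a tree on ℕ and let S ⊆ T be a subordering such that every branch of T contains cofinally a branch of S. If S has finitely many minimal elements (roots), then T has finitely many minimal elements; indeed the number of minimal elements of T is at most the number of minimal elements of S. In particular, every tree T with T ≤_t T₀^{(n)} for some tree T₀^{(n)} with finitely many roots has finitely many roots. -/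
/-- A tree on `ℕ`: `r` is a partial order supported on `T` whose predecessor sets
are linearly ordered and such that `r i j` implies `i ≤ j` in `ℕ`. -/
def IsTreeOn (T : Set ℕ) (r : ℕ → ℕ → Prop) : Prop :=
  (∀ i j, r i j → i ∈ T ∧ j ∈ T) ∧
  (∀ i ∈ T, r i i) ∧
  (∀ i j, r i j → r j i → i = j) ∧
  (∀ i j k, r i j → r j k → r i k) ∧
  (∀ i ∈ T, ∀ j k, r j i → r k i → r j k ∨ r k j) ∧
  (∀ i j, r i j → i ≤ j)

/-- A chain of `(T, r)`. -/
def IsChainIn (T : Set ℕ) (r : ℕ → ℕ → Prop) (C : Set ℕ) : Prop :=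
  C ⊆ T ∧ ∀ x ∈ C, ∀ y ∈ C, r x y ∨ r y x

/-- A branch of `(T, r)`: a maximal chain. -/
def IsBranch (T : Set ℕ) (r : ℕ → ℕ → Prop) (B : Set ℕ) : Prop :=
  IsChainIn T r B ∧ ∀ C, IsChainIn T r C → B ⊆ C → C = B

/-- The restriction of a relation to a set. -/
def restrictRel (r : ℕ → ℕ → Prop) (S : Set ℕ) : ℕ → ℕ → Prop :=
  fun i j => r i j ∧ i ∈ S ∧ j ∈ S

/-- `T ≤_t S`: `(S, rS)` is a subordering of `(T, rT)` and every branch of `T`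
contains cofinally a branch of `S`. -/
def TreeLe (T : Set ℕ) (rT : ℕ → ℕ → Prop) (S : Set ℕ) (rS : ℕ → ℕ → Prop) : Prop :=
  S ⊆ T ∧ (∀ i j, rS i j ↔ restrictRel rT S i j) ∧
  ∀ B, IsBranch T rT B → ∃ b, IsBranch S rS b ∧ b ⊆ B ∧ ∀ x ∈ B, ∃ y ∈ b, rT x y

/-- if every branch of a tree `(T, rT)` contains cofinally a branch of
the subordering `S`, and `S` has finitely many minimal elements, then `T` has
finitely many minimal elements, and indeed at most as many as `S` has. -/
theorem roots_finite_of_treeLe (T : Set ℕ) (rT : ℕ → ℕ → Prop) (hT : IsTreeOn T rT)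
    (S : Set ℕ) (hS : S ⊆ T)
    (hcof : ∀ B, IsBranch T rT B → ∃ b, IsBranch S (restrictRel rT S) b ∧ b ⊆ B ∧
      ∀ x ∈ B, ∃ y ∈ b, rT x y)
    (hSroots : {x | x ∈ S ∧ ∀ y ∈ S, restrictRel rT S y x → y = x}.Finite) :
    {x | x ∈ T ∧ ∀ y ∈ T, rT y x → y = x}.Finite ∧
      {x | x ∈ T ∧ ∀ y ∈ T, rT y x → y = x}.ncard ≤
        {x | x ∈ S ∧ ∀ y ∈ S, restrictRel rT S y x → y = x}.ncard := by
  obtain ⟨hdom, hrefl, hanti, htrans, hcomp, hle⟩ := hT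
  set RS := {x | x ∈ S ∧ ∀ y ∈ S, restrictRel rT S y x → y = x} with hRS
  set RT := {x | x ∈ T ∧ ∀ y ∈ T, rT y x → y = x} with hRT
  -- main claim: every root of T is rT-below some root of S
  have key : ∀ x ∈ RT, ∃ s, s ∈ RS ∧ rT x s := by
    rintro x ⟨hxT, hxmin⟩
    -- a branch of T containing x
    obtain ⟨B, hxB, hBmem, hBmax⟩ :
        ∃ B, {x} ⊆ B ∧ IsChainIn T rT B ∧ ∀ C, IsChainIn T rT C → B ⊆ C → C = B := by
      have hxchain : IsChainIn T rT {x} := by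
        refine ⟨Set.singleton_subset_iff.2 hxT, ?_⟩
        intro a ha c hc
        simp only [Set.mem_singleton_iff] at ha hc
        subst ha; subst hc
        exact Or.inl (hrefl _ hxT)
      obtain ⟨B, hxB, hBmax⟩ := zorn_subset_nonempty {C | IsChainIn T rT C}
        (fun c hc hchain _ => by
          refine ⟨⋃₀ c, ⟨?_, ?_⟩, fun s hs => Set.subset_sUnion_of_mem hs⟩
          · rintro a ⟨C, hC, haC⟩
            exact (hc hC).1 haC
          · rintro a ⟨C, hC, haC⟩ b ⟨D, hD, hbD⟩
            rcases hchain.total hC hD with h | h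
            · exact (hc hD).2 a (h haC) b hbD
            · exact (hc hC).2 a haC b (h hbD))
        {x} hxchain
      exact ⟨B, hxB, hBmax.prop, fun C hC hBC => (hBmax.eq_of_le hC hBC).symm⟩
    have hxB' : x ∈ B := hxB rfl
    obtain ⟨b, ⟨⟨hbS, hbchain⟩, hbmax⟩, hbB, hbcof⟩ := hcof B ⟨⟨hBmem.1, hBmem.2⟩,
      fun C hC hBC => hBmax C hC hBC⟩
    obtain ⟨y, hyb, _⟩ := hbcof x hxB'
    -- least element of b in ℕ
    obtain ⟨m, hmb, hmlt⟩ := Nat.lt_wfRel.wf.has_min b ⟨y, hyb⟩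
    have hmmin : ∀ w ∈ b, m ≤ w := fun w hw => not_lt.1 (hmlt w hw)
    -- m is rS-least in b
    have hmleast : ∀ w ∈ b, restrictRel rT S m w := by
      intro w hw
      rcases hbchain m hmb w hw with h | h
      · exact h
      · have : w = m := le_antisymm (hle _ _ h.1) (hmmin w hw)
        subst this; exact h
    -- m is a root of S
    have hmroot : m ∈ RS := by
      refine ⟨hbS hmb, fun z hzS hzm => ?_⟩
      have hchainz : IsChainIn S (restrictRel rT S) (insert z b) := by
        refine ⟨Set.insert_subset hzS hbS, ?_⟩
        have hzle : ∀ q ∈ insert z b, restrictRel rT S z q := by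
          intro q hq
          rcases Set.mem_insert_iff.1 hq with h | h
          · subst h; exact ⟨hrefl q (hS hzS), hzS, hzS⟩
          · exact ⟨htrans _ _ _ hzm.1 (hmleast q h).1, hzS, hbS h⟩
        intro p hp q hq
        rcases Set.mem_insert_iff.1 hp with h | h
        · subst h; exact Or.inl (hzle q hq)
        · rcases Set.mem_insert_iff.1 hq with h2 | h2
          · subst h2; exact Or.inr (hzle p hp)
          · exact hbchain p h q h2
      have := hbmax _ hchainz (Set.subset_insert z b)
      have hzb : z ∈ b := this ▸ Set.mem_insert z b
      exact le_antisymm (hle _ _ hzm.1) (hmmin z hzb)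
    -- rT x m
    have hmB : m ∈ B := hbB hmb
    rcases hBmem.2 x hxB' m hmB with h | h
    · exact ⟨m, hmroot, h⟩
    · have := hxmin m (hS (hbS hmb)) h
      exact ⟨m, hmroot, this ▸ hrefl x hxT⟩
  -- build the function
  choose! f hf1 hf2 using key
  have hmaps : ∀ x ∈ RT, f x ∈ RS := hf1
  have hinj : Set.InjOn f RT := by
    intro x₁ h₁ x₂ h₂ hfe
    have r₁ : rT x₁ (f x₁) := hf2 x₁ h₁
    have r₂ : rT x₂ (f x₁) := hfe ▸ hf2 x₂ h₂
    rcases hcomp (f x₁) (hS (hf1 x₁ h₁).1) x₁ x₂ r₁ r₂ with h | h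
    · exact (h₂.2 x₁ h₁.1 h).symm ▸ (h₂.2 x₁ h₁.1 h)
    · exact h₁.2 x₂ h₂.1 h ▸ rfl
  have hfin : RT.Finite := Set.Finite.of_finite_image
    ((hSroots.subset (Set.image_subset_iff.2 (fun x hx => hmaps x hx)))) hinj
  exact ⟨hfin, Set.ncard_le_ncard_of_injOn f hmaps hinj hSroots⟩
end

section
/- (Lemma 2.1, fusion.) Let F be a filter on ℕ containing every cofinite set with ∅ ∉ F and I its dual ideal; assume I satisfies the P-property and fatness, and fix a tree T₀ on ℕ with T₀ ∈ I which is order-isomorphic to the full binary tree of height ω. Let Q be the countable product forcing defined from T₀ and I. Then for every decreasing sequence p_0 ≥ p_1 ≥ p_2 ≥ … of conditions in Q there exist q ∈ Q and an infinite set Z ⊆ ℕ such that q ≤ p_n^{(n)} for every n ∈ Z. -/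
/-- `T₀` with the numbers `≤ n` deleted. -/
def treeCut (T : Set ℕ) (n : ℕ) : Set ℕ := T ∩ Set.Ioi n

/-- A condition of the countable product forcing `Q = Pᵒᵐᵉᵍᵃ`: a sequence of
coordinates, each consisting of a tree `T i` with its order `r i` and a partial 0-1
function `f i` (with `f i j = none` meaning `j ∉ dm (f i)`). -/
structure QCond where
  T : ℕ → Set ℕ
  r : ℕ → ℕ → ℕ → Prop
  f : ℕ → ℕ → Option Bool

/-- Validity of a `Q`-condition with respect to the dual ideal of `F` and the base
binary tree `(T₀, r₀)`: each coordinate `⟨T i, r i, f i⟩` is a member of `P`, i.e.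
`T i` is a tree lying in the dual ideal `I = {A | Aᶜ ∈ F}` with
`T i ≤_t T₀⁽ⁿ⁾` for some `n` (so `T i ∈ 𝒯`), and `f i` is a 0-1 function whose
domain is exactly `T i`. -/
def QCond.valid (F : Filter ℕ) (T₀ : Set ℕ) (r₀ : ℕ → ℕ → Prop) (q : QCond) : Prop :=
  ∀ i : ℕ,
    IsTreeOn (q.T i) (q.r i) ∧
    (q.T i)ᶜ ∈ F ∧
    (∃ n : ℕ, TreeLe (q.T i) (q.r i) (treeCut T₀ n) (restrictRel r₀ (treeCut T₀ n))) ∧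
    (∀ j : ℕ, (q.f i j).isSome ↔ j ∈ q.T i)

/-- The coordinatewise ordering of `Q`: `q ≤ p` iff in every coordinate the tree of
`q` is `≤_t` the tree of `p` and the function of `q` extends the function of `p`. -/
def QCond.le (q p : QCond) : Prop :=
  ∀ i : ℕ, TreeLe (q.T i) (q.r i) (p.T i) (p.r i) ∧ ∀ j ∈ p.T i, q.f i j = p.f i j

/-- `q⁽ⁿ⁾`: the first `n` coordinates of `q` are restricted to their trees with the
numbers `≤ n` deleted; the remaining coordinates are unchanged. -/
def QCond.res (q : QCond) (n : ℕ) : QCond where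
  T := fun i => if i < n then treeCut (q.T i) n else q.T i
  r := fun i => if i < n then restrictRel (q.r i) (treeCut (q.T i) n) else q.r i
  f := fun i j => if i < n ∧ j ≤ n then none else q.f i j

/-!
Fatness, applied to `A n = ⋃_{i<n} (tree i of (p n)⁽ⁿ⁾)` (a finite union of members of `I`, all of
whose elements exceed `n`), gives an infinite `Z` with `⋃_{n∈Z} A n ∈ I`. The fusion `q` takes as
its `i`-th tree the union over `n ∈ Z` of the `i`-th trees of `(p n)⁽ⁿ⁾`; this lies in `I`, being
covered by the `i`-th tree of `p i` (for `n ≤ i`) and by `⋃_{n∈Z} A n` (for `n > i`). Along the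
decreasing sequence each tree is a subordering of the later ones, so the union is again a tree,
and it contains a tail of `T₀`. Both `q ∈ Q` and `q ≤ (p n)⁽ⁿ⁾` then reduce to one fact: every
branch of the union meets `T₀` in an unbounded set. This is where `T₀` being the full binary
tree enters, through the finiteness of each of its levels.
-/

open Set

section Trees

variable {T S U B C : Set ℕ} {r rS R : ℕ → ℕ → Prop} {t x y z : ℕ}

namespace IsTreeOn

theorem mem (hT : IsTreeOn T r) (h : r x y) : x ∈ T ∧ y ∈ T := hT.1 x y h

theorem refl (hT : IsTreeOn T r) (hx : x ∈ T) : r x x := hT.2.1 x hx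

theorem trans (hT : IsTreeOn T r) (hxy : r x y) (hyz : r y z) : r x z :=
  hT.2.2.2.1 x y z hxy hyz

theorem total_of_rel (hT : IsTreeOn T r) (hx : r x z) (hy : r y z) : r x y ∨ r y x :=
  hT.2.2.2.2.1 z (hT.mem hx).2 x y hx hy

theorem le (hT : IsTreeOn T r) (h : r x y) : x ≤ y := hT.2.2.2.2.2 x y h

theorem restrict (hT : IsTreeOn T r) (hS : S ⊆ T) : IsTreeOn S (restrictRel r S) :=
  ⟨fun _ _ h => h.2, fun _ hx => ⟨hT.refl (hS hx), hx, hx⟩,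
    fun _ _ h h' => le_antisymm (hT.le h.1) (hT.le h'.1),
    fun _ _ _ h h' => ⟨hT.trans h.1 h'.1, h.2.1, h'.2.2⟩,
    fun _ _ _ _ hx hy => (hT.total_of_rel hx.1 hy.1).imp (fun h => ⟨h, hx.2.1, hy.2.1⟩)
      (fun h => ⟨h, hy.2.1, hx.2.1⟩),
    fun _ _ h => hT.le h.1⟩

end IsTreeOn

theorem IsChainIn.exists_isBranch (hC : IsChainIn T r C) : ∃ B, IsBranch T r B ∧ C ⊆ B := by
  have hunion : ∀ c ⊆ {D | IsChainIn T r D}, IsChain (· ⊆ ·) c → IsChainIn T r (⋃₀ c) := by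
    refine fun c hc hchain => ⟨sUnion_subset fun D hD => (hc hD).1, ?_⟩
    rintro x ⟨D₁, hD₁, hx⟩ y ⟨D₂, hD₂, hy⟩
    rcases hchain.total hD₁ hD₂ with h | h
    · exact (hc hD₂).2 x (h hx) y hy
    · exact (hc hD₁).2 x hx y (h hy)
  obtain ⟨B, hCB, hmax⟩ := zorn_subset_nonempty {D | IsChainIn T r D}
    (fun c hc hchain _ => ⟨⋃₀ c, hunion c hc hchain, fun _ => subset_sUnion_of_mem⟩) C hC
  exact ⟨B, ⟨hmax.prop, fun D hD hBD => (hmax.eq_of_subset hD hBD).symm⟩, hCB⟩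

namespace IsBranch

theorem mem_of_forall_rel_or_rel (hB : IsBranch T r B) (hT : IsTreeOn T r) (hz : z ∈ T)
    (h : ∀ w ∈ B, r z w ∨ r w z) : z ∈ B := by
  have hchain : IsChainIn T r (insert z B) := by
    refine ⟨insert_subset hz hB.1.1, ?_⟩
    rintro x (rfl | hx) y (rfl | hy)
    · exact Or.inl (hT.refl hz)
    · exact h y hy
    · exact (h x hx).symm
    · exact hB.1.2 x hx y hy
  exact hB.2 _ hchain (subset_insert z B) ▸ mem_insert z B

theorem mem_of_rel (hB : IsBranch T r B) (hT : IsTreeOn T r) (hy : y ∈ B) (hzy : r z y) :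
    z ∈ B :=
  hB.mem_of_forall_rel_or_rel hT (hT.mem hzy).1 fun w hw =>
    (hB.1.2 w hw y hy).elim (hT.total_of_rel hzy) fun hyw => Or.inl (hT.trans hzy hyw)

theorem exists_gt (hB : IsBranch T r B) (hT : IsTreeOn T r) (hne : T.Nonempty)
    (hext : ∀ t ∈ T, ∀ γ, ∃ v, r t v ∧ γ < v) (β : ℕ) : ∃ b ∈ B, β < b := by
  by_contra! hβ
  rcases B.eq_empty_or_nonempty with rfl | hBne
  · obtain ⟨t, ht⟩ := hne
    exact hB.mem_of_forall_rel_or_rel hT ht (by simp)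
  · have hbdd : BddAbove B := ⟨β, hβ⟩
    set t := sSup B
    have htB : t ∈ B := Nat.sSup_mem hBne hbdd
    obtain ⟨v, htv, hv⟩ := hext t (hB.1.1 htB) β
    have hvB : v ∈ B := hB.mem_of_forall_rel_or_rel hT (hT.mem htv).2 fun w hw => by
      refine Or.inr ?_
      rcases hB.1.2 w hw t htB with hwt | htw
      · exact hT.trans hwt htv
      · rwa [le_antisymm (le_csSup hbdd hw) (hT.le htw)]
    exact absurd (hβ v hvB) (not_le.2 hv)

theorem exists_rel_mem_of_frequently {W : Set ℕ} {K : ℕ} (hB : IsBranch U R B)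
    (hU : IsTreeOn U R) (hfreq : ∀ θ, ∃ w ∈ B ∩ W, θ < w) (hWS : W ∩ Ioi K ⊆ S)
    (hx : x ∈ B) : ∃ y ∈ B ∩ S, R x y := by
  obtain ⟨w, ⟨hwB, hwW⟩, hw⟩ := hfreq (max K x)
  refine ⟨w, ⟨hwB, hWS ⟨hwW, (le_max_left K x).trans_lt hw⟩⟩, ?_⟩
  refine (hB.1.2 x hx w hwB).resolve_right fun hwx => ?_
  exact absurd (hU.le hwx) (not_le.2 ((le_max_right K x).trans_lt hw))

/-- If `B` met `T₀` only below `θ`, then for a large `b ∈ B` the least node `w ∈ T₀` above `b`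
would have all its proper `r₀`-predecessors below `max θ K` (those above `b` contradict
minimality, those below `b` lie in `B`). Only finitely many nodes of `T₀` are of this kind, and
`b` can be chosen above all of them, contradicting `b < w`. -/
theorem exists_mem_inter_gt {T₀ : Set ℕ} {r₀ : ℕ → ℕ → Prop} (hB : IsBranch U R B)
    (hU : IsTreeOn U R) (hfin : ∀ N, {v ∈ T₀ | ∀ u ∈ T₀, r₀ u v → u ≠ v → u ≤ N}.Finite)
    (K : ℕ) (hK : ∀ x ∈ treeCut T₀ K, ∀ y ∈ treeCut T₀ K, r₀ x y → R x y)
    (hunb : ∀ β, ∃ b ∈ B, β < b) (hup : ∀ b ∈ B, ∃ w ∈ T₀, R b w) (θ : ℕ) :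
    ∃ w ∈ B ∩ T₀, θ < w := by
  classical
  by_contra! hθ
  obtain ⟨βG, hβG⟩ := (hfin (max θ K)).bddAbove
  obtain ⟨b, hbB, hb⟩ := hunb (max (max θ K) βG)
  have hex : ∃ w, w ∈ T₀ ∧ R b w := by simpa only [exists_prop] using hup b hbB
  obtain ⟨hwT, hbw⟩ := Nat.find_spec hex
  set w := Nat.find hex
  have hbT : b ∉ T₀ := fun h => by have := hθ b ⟨hbB, h⟩; omega
  have hbw_lt : b < w := (hU.le hbw).lt_of_ne fun h => hbT (h ▸ hwT)
  have hwG : w ∈ {v ∈ T₀ | ∀ u ∈ T₀, r₀ u v → u ≠ v → u ≤ max θ K} := by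
    refine ⟨hwT, fun u hu huw hne => ?_⟩
    by_contra! hu_gt
    have hRuw : R u w := hK u ⟨hu, mem_Ioi.2 (by omega)⟩ w ⟨hwT, mem_Ioi.2 (by omega)⟩ huw
    rcases hU.total_of_rel hbw hRuw with hbu | hub
    · exact hne (le_antisymm (hU.le hRuw) (Nat.find_min' hex ⟨hu, hbu⟩))
    · have := hθ u ⟨hB.mem_of_rel hU hbB hub, hu⟩
      omega
  have := hβG hwG
  omega

end IsBranch

theorem TreeLe.exists_rel_gt (hTS : TreeLe T r S rS) (hT : IsTreeOn T r)
    (hS : ∀ b, IsBranch S rS b → ∀ β, ∃ y ∈ b, β < y) (ht : t ∈ T) (γ : ℕ) :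
    ∃ w ∈ S, γ < w ∧ r t w := by
  have hchain : IsChainIn T r {t} := by
    refine ⟨singleton_subset_iff.2 ht, ?_⟩
    rintro x rfl y rfl
    exact Or.inl (hT.refl ht)
  obtain ⟨B, hB, htB⟩ := hchain.exists_isBranch
  obtain ⟨b, hb, -, hbcof⟩ := hTS.2.2 B hB
  obtain ⟨y, hyb, hty⟩ := hbcof t (htB rfl)
  obtain ⟨w, hwb, hw⟩ := hS b hb (max γ y)
  have hyw : r y w := by
    refine (hb.1.2 y hyb w hwb).elim (fun h => ((hTS.2.1 y w).1 h).1) fun h => ?_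
    exact absurd (hT.le ((hTS.2.1 w y).1 h).1) (not_le.2 ((le_max_right γ y).trans_lt hw))
  exact ⟨w, hb.1.1 hwb, (le_max_left γ y).trans_lt hw, hT.trans hty hyw⟩

theorem treeLe_of_cofinal (hU : IsTreeOn U R) (hSU : S ⊆ U)
    (hrS : ∀ x y, rS x y ↔ restrictRel R S x y)
    (hcof : ∀ B, IsBranch U R B → ∀ x ∈ B, ∃ y ∈ B ∩ S, R x y) : TreeLe U R S rS := by
  refine ⟨hSU, hrS, fun B hB => ⟨B ∩ S, ⟨⟨inter_subset_right, ?_⟩, ?_⟩, inter_subset_left,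
    hcof B hB⟩⟩
  · rintro x ⟨hxB, hxS⟩ y ⟨hyB, hyS⟩
    exact (hB.1.2 x hxB y hyB).imp (fun h => (hrS x y).2 ⟨h, hxS, hyS⟩)
      (fun h => (hrS y x).2 ⟨h, hyS, hxS⟩)
  · refine fun C hC hBC => (Subset.antisymm (fun z hzC => ⟨?_, hC.1 hzC⟩) hBC)
    refine hB.mem_of_forall_rel_or_rel hU (hSU (hC.1 hzC)) fun w hw => ?_
    obtain ⟨y, hy, hwy⟩ := hcof B hB w hw
    rcases hC.2 z hzC y (hBC hy) with hzy | hyz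
    · exact hU.total_of_rel ((hrS z y).1 hzy).1 hwy
    · exact Or.inr (hU.trans hwy ((hrS y z).1 hyz).1)

end Trees

def IsFullBinaryTree (T₀ : Set ℕ) (r₀ : ℕ → ℕ → Prop) : Prop :=
  ∃ g : ℕ → List Bool, Set.BijOn g T₀ Set.univ ∧ ∀ i ∈ T₀, ∀ j ∈ T₀, (r₀ i j ↔ g i <+: g j)

namespace IsFullBinaryTree

variable {T₀ : Set ℕ} {r₀ : ℕ → ℕ → Prop}

theorem infinite (h : IsFullBinaryTree T₀ r₀) : T₀.Infinite := by
  obtain ⟨g, hg, -⟩ := h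
  exact Infinite.of_image g (hg.image_eq ▸ infinite_univ)

theorem exists_rel_gt (h : IsFullBinaryTree T₀ r₀) {t : ℕ} (ht : t ∈ T₀) (γ : ℕ) :
    ∃ v ∈ T₀, r₀ t v ∧ γ < v := by
  obtain ⟨g, hg, hord⟩ := h
  have hinf : {v ∈ T₀ | r₀ t v}.Infinite := by
    refine Infinite.of_image g (infinite_of_injective_forall_mem
      (f := fun k => g t ++ List.replicate k true) (fun k k' he => ?_) fun k => ?_)
    · simpa using congrArg List.length he
    · obtain ⟨v, hv, hgv⟩ := hg.surjOn (mem_univ (g t ++ List.replicate k true))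
      exact ⟨v, ⟨hv, (hord t ht v hv).2 (hgv ▸ List.prefix_append _ _)⟩, hgv⟩
  obtain ⟨v, ⟨hv, htv⟩, hγv⟩ := hinf.exists_gt γ
  exact ⟨v, hv, htv, hγv⟩

theorem finite_setOf_forall_rel_ne_le (h : IsFullBinaryTree T₀ r₀) (N : ℕ) :
    {v ∈ T₀ | ∀ u ∈ T₀, r₀ u v → u ≠ v → u ≤ N}.Finite := by
  obtain ⟨g, hg, hord⟩ := h
  choose u huT hgu using fun σ : List Bool => hg.surjOn (mem_univ σ)
  have hlen_u : ∀ σ, (g (u σ)).length = σ.length := fun σ => by rw [hgu]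
  -- the prefixes of `g v` name `(g v).length` distinct proper predecessors of `v`
  have hlen : ∀ v ∈ {v ∈ T₀ | ∀ u ∈ T₀, r₀ u v → u ≠ v → u ≤ N}, (g v).length ≤ N + 1 := by
    rintro v ⟨hv, hpred⟩
    have hmaps : MapsTo (fun k => u ((g v).take k)) (Finset.range (g v).length)
        (Finset.range (N + 1)) := fun k hk => by
      have hk : k < (g v).length := Finset.mem_range.1 hk
      refine Finset.mem_range.2 (Nat.lt_succ_of_le (hpred _ (huT _) ?_ fun (he : u _ = v) => ?_))
      · exact (hord _ (huT _) v hv).2 ((hgu _).symm ▸ List.take_prefix k (g v))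
      · have := hlen_u ((g v).take k)
        rw [he, List.length_take] at this
        omega
    have hinj : InjOn (fun k => u ((g v).take k)) (Finset.range (g v).length) :=
      fun k hk k' hk' he => by
        have := congrArg (fun w => (g w).length) he
        simp only [hlen_u, List.length_take] at this
        simp only [Finset.coe_range, mem_Iio] at hk hk'
        omega
    simpa using Finset.card_le_card_of_injOn _ hmaps hinj
  refine Finite.of_finite_image ((List.finite_length_le Bool (N + 1)).subset ?_)
    (hg.injOn.mono fun v hv => hv.1)
  rintro _ ⟨v, hv, rfl⟩
  exact hlen v hv

theorem isBranch_treeCut_exists_gt (h : IsFullBinaryTree T₀ r₀) (hT₀ : IsTreeOn T₀ r₀) {K : ℕ}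
    {b : Set ℕ} (hb : IsBranch (treeCut T₀ K) (restrictRel r₀ (treeCut T₀ K)) b) (β : ℕ) :
    ∃ y ∈ b, β < y := by
  refine hb.exists_gt (hT₀.restrict inter_subset_left) ?_ (fun t ht γ => ?_) β
  · obtain ⟨v, hv, hKv⟩ := h.infinite.exists_gt K
    exact ⟨v, hv, hKv⟩
  · obtain ⟨v, hv, htv, hγKv⟩ := h.exists_rel_gt ht.1 (max γ K)
    exact ⟨v, ⟨htv, ht, hv, (le_max_right γ K).trans_lt hγKv⟩, (le_max_left γ K).trans_lt hγKv⟩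

end IsFullBinaryTree

namespace QCond

section Res

variable {F : Filter ℕ} {T₀ : Set ℕ} {r₀ : ℕ → ℕ → Prop} (q : QCond) {i j n x y : ℕ}

theorem res_T_subset : (q.res n).T i ⊆ q.T i := by
  dsimp only [res]
  split_ifs
  exacts [inter_subset_left, subset_rfl]

theorem inter_Ioi_subset_res_T : q.T i ∩ Ioi n ⊆ (q.res n).T i := by
  dsimp only [res]
  split_ifs
  exacts [subset_rfl, inter_subset_left]

theorem lt_of_mem_res_T (hi : i < n) (hx : x ∈ (q.res n).T i) : n < x := by
  simp only [res, if_pos hi] at hx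
  exact hx.2

theorem res_f_of_mem (hj : j ∈ (q.res n).T i) : (q.res n).f i j = q.f i j := by
  dsimp only [res]
  rw [if_neg]
  rintro ⟨hi, hjn⟩
  exact absurd (q.lt_of_mem_res_T hi hj) (not_lt.2 hjn)

theorem res_r_iff (hq : IsTreeOn (q.T i) (q.r i)) :
    (q.res n).r i x y ↔ restrictRel (q.r i) ((q.res n).T i) x y := by
  dsimp only [res]
  split_ifs
  · rfl
  · exact ⟨fun h => ⟨h, hq.mem h⟩, And.left⟩

def headUnion (n : ℕ) : Set ℕ := ⋃ i ∈ Iio n, (q.res n).T i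

variable {q}

theorem valid.compl_headUnion_mem (hq : q.valid F T₀ r₀) (n : ℕ) : (q.headUnion n)ᶜ ∈ F := by
  rw [headUnion, compl_iUnion₂]
  exact (Filter.biInter_mem (finite_Iio n)).2 fun i _ =>
    Filter.mem_of_superset (hq i).2.1 (compl_subset_compl.2 q.res_T_subset)

theorem valid.exists_treeCut_subset_res (hq : q.valid F T₀ r₀) (i n : ℕ) :
    ∃ K, treeCut T₀ K ⊆ (q.res n).T i := by
  obtain ⟨K, hK⟩ := (hq i).2.2.1
  exact ⟨max K n, fun x hx => q.inter_Ioi_subset_res_T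
    ⟨hK.1 ⟨hx.1, (le_max_left K n).trans_lt hx.2⟩, (le_max_right K n).trans_lt hx.2⟩⟩

end Res

theorem finite_setOf_headUnion_inter_Iic_nonempty (p : ℕ → QCond) (k : ℕ) :
    {n | ((p n).headUnion n ∩ Iic k).Nonempty}.Finite :=
  (finite_Iio k).subset fun n ⟨x, hx, hxk⟩ => by
    obtain ⟨i, hi, hxi⟩ := mem_iUnion₂.1 hx
    exact ((p n).lt_of_mem_res_T hi hxi).trans_le hxk

section Decreasing

variable {p : ℕ → QCond} {i j n m x y : ℕ}

theorem monotone_T (hdec : ∀ n, (p (n + 1)).le (p n)) (i : ℕ) : Monotone fun n => (p n).T i :=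
  monotone_nat_of_le_succ fun n => (hdec n i).1.1

theorem rel_iff_of_le (hdec : ∀ n, (p (n + 1)).le (p n)) (hnm : n ≤ m)
    (hx : x ∈ (p n).T i) (hy : y ∈ (p n).T i) : (p m).r i x y ↔ (p n).r i x y := by
  induction m, hnm using Nat.le_induction with
  | base => rfl
  | succ m hnm ih =>
    rw [← ih, (hdec m i).1.2.1 x y]
    exact ⟨fun h => ⟨h, monotone_T hdec i hnm hx, monotone_T hdec i hnm hy⟩, And.left⟩

theorem f_eq_of_le (hdec : ∀ n, (p (n + 1)).le (p n)) (hnm : n ≤ m) (hj : j ∈ (p n).T i) :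
    (p m).f i j = (p n).f i j := by
  induction m, hnm using Nat.le_induction with
  | base => rfl
  | succ m hnm ih => exact ((hdec m i).2 j (monotone_T hdec i hnm hj)).trans ih

theorem f_eq_of_mem (hdec : ∀ n, (p (n + 1)).le (p n)) (hm : j ∈ (p m).T i)
    (hn : j ∈ (p n).T i) : (p m).f i j = (p n).f i j := by
  rcases le_total m n with h | h
  · exact (f_eq_of_le hdec h hm).symm
  · exact f_eq_of_le hdec h hn

def limRel (p : ℕ → QCond) (i x y : ℕ) : Prop := ∃ m, (p m).r i x y

theorem rel_of_le (hdec : ∀ n, (p (n + 1)).le (p n))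
    (hT : ∀ n, IsTreeOn ((p n).T i) ((p n).r i)) (hnm : n ≤ m) (h : (p n).r i x y) :
    (p m).r i x y :=
  (rel_iff_of_le hdec hnm ((hT n).mem h).1 ((hT n).mem h).2).2 h

theorem limRel_iff (hdec : ∀ n, (p (n + 1)).le (p n))
    (hT : ∀ n, IsTreeOn ((p n).T i) ((p n).r i)) (hx : x ∈ (p n).T i) (hy : y ∈ (p n).T i) :
    limRel p i x y ↔ (p n).r i x y := by
  refine ⟨fun ⟨m, h⟩ => ?_, fun h => ⟨n, h⟩⟩
  rcases le_total m n with hmn | hnm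
  · exact rel_of_le hdec hT hmn h
  · exact (rel_iff_of_le hdec hnm hx hy).1 h

theorem isTreeOn_limRel (hdec : ∀ n, (p (n + 1)).le (p n))
    (hT : ∀ n, IsTreeOn ((p n).T i) ((p n).r i)) : IsTreeOn (⋃ m, (p m).T i) (limRel p i) :=
  ⟨fun _ _ ⟨m, h⟩ => ⟨mem_iUnion.2 ⟨m, ((hT m).mem h).1⟩, mem_iUnion.2 ⟨m, ((hT m).mem h).2⟩⟩,
    fun _ hx => (mem_iUnion.1 hx).imp fun m hm => (hT m).refl hm,
    fun _ _ ⟨m, h⟩ ⟨m', h'⟩ => le_antisymm ((hT m).le h) ((hT m').le h'),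
    fun _ _ _ ⟨m, h⟩ ⟨m', h'⟩ => ⟨max m m', (hT _).trans (rel_of_le hdec hT (le_max_left m m') h)
      (rel_of_le hdec hT (le_max_right m m') h')⟩,
    fun _ _ _ _ ⟨m, h⟩ ⟨m', h'⟩ => ((hT _).total_of_rel (rel_of_le hdec hT (le_max_left m m') h)
      (rel_of_le hdec hT (le_max_right m m') h')).imp (⟨_, ·⟩) (⟨_, ·⟩),
    fun _ _ ⟨m, h⟩ => (hT m).le h⟩

end Decreasing

open Classical in
/-- The functions `(p n).f` agree on the union of the trees, so `f` may read off any of them. -/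
noncomputable def fusion (p : ℕ → QCond) (Z : Set ℕ) : QCond where
  T i := ⋃ n ∈ Z, ((p n).res n).T i
  r i := restrictRel (limRel p i) (⋃ n ∈ Z, ((p n).res n).T i)
  f i j := if h : ∃ n ∈ Z, j ∈ ((p n).res n).T i then (p h.choose).f i j else none

section Fusion

variable {F : Filter ℕ} {T₀ : Set ℕ} {r₀ : ℕ → ℕ → Prop} {p : ℕ → QCond} {Z S : Set ℕ}
  {rS : ℕ → ℕ → Prop} {i j n t : ℕ}

theorem mem_fusion_T : t ∈ (fusion p Z).T i ↔ ∃ n ∈ Z, t ∈ ((p n).res n).T i := by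
  simp [fusion]

theorem isTreeOn_fusion (hdec : ∀ n, (p (n + 1)).le (p n))
    (hT : ∀ n, IsTreeOn ((p n).T i) ((p n).r i)) :
    IsTreeOn ((fusion p Z).T i) ((fusion p Z).r i) :=
  (isTreeOn_limRel hdec hT).restrict fun _ ht =>
    let ⟨n, _, htn⟩ := mem_fusion_T.1 ht
    mem_iUnion.2 ⟨n, (p n).res_T_subset htn⟩

theorem fusion_T_subset_union (hdec : ∀ n, (p (n + 1)).le (p n)) :
    (fusion p Z).T i ⊆ (p i).T i ∪ ⋃ n ∈ Z, (p n).headUnion n := by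
  intro t ht
  obtain ⟨n, hn, htn⟩ := mem_fusion_T.1 ht
  by_cases hi : i < n
  · exact Or.inr (mem_biUnion hn (mem_biUnion hi htn))
  · exact Or.inl (monotone_T hdec i (not_lt.1 hi) ((p n).res_T_subset htn))

theorem fusion_f_of_mem (hdec : ∀ n, (p (n + 1)).le (p n)) (hn : n ∈ Z)
    (hj : j ∈ ((p n).res n).T i) : (fusion p Z).f i j = (p n).f i j := by
  have h : ∃ n ∈ Z, j ∈ ((p n).res n).T i := ⟨n, hn, hj⟩
  simp only [fusion, dif_pos h]
  exact f_eq_of_mem hdec ((p _).res_T_subset h.choose_spec.2) ((p n).res_T_subset hj)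

theorem fusion_f_isSome_iff (hdec : ∀ n, (p (n + 1)).le (p n))
    (hvalid : ∀ n, (p n).valid F T₀ r₀) :
    ((fusion p Z).f i j).isSome ↔ j ∈ (fusion p Z).T i := by
  rw [mem_fusion_T]
  by_cases h : ∃ n ∈ Z, j ∈ ((p n).res n).T i
  · obtain ⟨n, hn, hj⟩ := h
    rw [fusion_f_of_mem hdec hn hj, (hvalid n i).2.2.2]
    exact iff_of_true ((p n).res_T_subset hj) ⟨n, hn, hj⟩
  · simp only [fusion, dif_neg h, Option.isSome_none, Bool.false_eq_true]
    exact iff_of_false not_false h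

theorem fusion_exists_treeCut (hdec : ∀ n, (p (n + 1)).le (p n))
    (hvalid : ∀ n, (p n).valid F T₀ r₀) (hn : n ∈ Z) (i : ℕ) :
    ∃ K, treeCut T₀ K ⊆ (fusion p Z).T i ∧
      ∀ x ∈ treeCut T₀ K, ∀ y ∈ treeCut T₀ K, (r₀ x y ↔ (fusion p Z).r i x y) := by
  obtain ⟨K, hK⟩ := (hvalid n i).2.2.1
  have hcut : treeCut T₀ (max K n) ⊆ treeCut T₀ K :=
    inter_subset_inter_right _ (Ioi_subset_Ioi (le_max_left K n))
  have hU : treeCut T₀ (max K n) ⊆ (fusion p Z).T i := fun x hx =>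
    mem_fusion_T.2 ⟨n, hn, (p n).inter_Ioi_subset_res_T
      ⟨hK.1 (hcut hx), (le_max_right K n).trans_lt hx.2⟩⟩
  refine ⟨max K n, hU, fun x hx y hy => ?_⟩
  calc r₀ x y ↔ (p n).r i x y := by
        simpa only [restrictRel, hcut hx, hcut hy, and_true] using hK.2.1 x y
    _ ↔ limRel p i x y :=
        (limRel_iff hdec (fun m => (hvalid m i).1) (hK.1 (hcut hx)) (hK.1 (hcut hy))).symm
    _ ↔ (fusion p Z).r i x y := ⟨fun h => ⟨h, hU hx, hU hy⟩, And.left⟩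

theorem fusion_exists_rel_gt (hT₀ : IsTreeOn T₀ r₀) (hbin : IsFullBinaryTree T₀ r₀)
    (hvalid : ∀ n, (p n).valid F T₀ r₀) {K : ℕ} (hK : treeCut T₀ K ⊆ (fusion p Z).T i)
    (ht : t ∈ (fusion p Z).T i) (γ : ℕ) : ∃ w ∈ T₀, γ < w ∧ (fusion p Z).r i t w := by
  obtain ⟨n, -, htn⟩ := mem_fusion_T.1 ht
  obtain ⟨K', hK'⟩ := (hvalid n i).2.2.1
  obtain ⟨w, hw, hw_gt, htw⟩ := hK'.exists_rel_gt (hvalid n i).1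
    (fun _ hb => hbin.isBranch_treeCut_exists_gt hT₀ hb) ((p n).res_T_subset htn) (max γ K)
  exact ⟨w, hw.1, (le_max_left γ K).trans_lt hw_gt, ⟨n, htw⟩, ht,
    hK ⟨hw.1, (le_max_right γ K).trans_lt hw_gt⟩⟩

theorem fusion_isBranch_frequently (hT₀ : IsTreeOn T₀ r₀) (hbin : IsFullBinaryTree T₀ r₀)
    (hvalid : ∀ n, (p n).valid F T₀ r₀) (hdec : ∀ n, (p (n + 1)).le (p n)) (hZ : Z.Nonempty)
    {B : Set ℕ} (hB : IsBranch ((fusion p Z).T i) ((fusion p Z).r i) B) (θ : ℕ) :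
    ∃ w ∈ B ∩ T₀, θ < w := by
  obtain ⟨n, hn⟩ := hZ
  obtain ⟨K, hKU, hKr⟩ := fusion_exists_treeCut hdec hvalid hn i
  have hU := isTreeOn_fusion (Z := Z) hdec fun m => (hvalid m i).1
  have hup : ∀ t ∈ (fusion p Z).T i, ∀ γ, ∃ w ∈ T₀, γ < w ∧ (fusion p Z).r i t w :=
    fun _ ht => fusion_exists_rel_gt hT₀ hbin hvalid hKU ht
  obtain ⟨w, hw, hKw⟩ := hbin.infinite.exists_gt K
  have hunb := hB.exists_gt hU ⟨w, hKU ⟨hw, hKw⟩⟩ fun t ht γ =>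
    let ⟨v, _, hγv, htv⟩ := hup t ht γ
    ⟨v, htv, hγv⟩
  refine hB.exists_mem_inter_gt hU hbin.finite_setOf_forall_rel_ne_le K
    (fun x hx y hy => (hKr x hx y hy).1) hunb (fun b hb => ?_) θ
  obtain ⟨v, hv, -, hbv⟩ := hup b (hB.1.1 hb) 0
  exact ⟨v, hv, hbv⟩

theorem fusion_treeLe (hT₀ : IsTreeOn T₀ r₀) (hbin : IsFullBinaryTree T₀ r₀)
    (hvalid : ∀ n, (p n).valid F T₀ r₀) (hdec : ∀ n, (p (n + 1)).le (p n)) (hZ : Z.Nonempty)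
    (hSU : S ⊆ (fusion p Z).T i) (hrS : ∀ x y, rS x y ↔ restrictRel ((fusion p Z).r i) S x y)
    (htail : ∃ K, treeCut T₀ K ⊆ S) : TreeLe ((fusion p Z).T i) ((fusion p Z).r i) S rS := by
  obtain ⟨K, hK⟩ := htail
  have hU := isTreeOn_fusion (Z := Z) hdec fun m => (hvalid m i).1
  exact treeLe_of_cofinal hU hSU hrS fun B hB x hx => hB.exists_rel_mem_of_frequently hU
    (fusion_isBranch_frequently hT₀ hbin hvalid hdec hZ hB) hK hx

theorem fusion_valid (hT₀ : IsTreeOn T₀ r₀) (hbin : IsFullBinaryTree T₀ r₀)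
    (hvalid : ∀ n, (p n).valid F T₀ r₀) (hdec : ∀ n, (p (n + 1)).le (p n)) (hZ : Z.Nonempty)
    (hZI : (⋃ n ∈ Z, (p n).headUnion n)ᶜ ∈ F) : (fusion p Z).valid F T₀ r₀ := by
  intro i
  obtain ⟨n, hn⟩ := hZ
  obtain ⟨K, hKU, hKr⟩ := fusion_exists_treeCut hdec hvalid hn i
  refine ⟨isTreeOn_fusion hdec fun m => (hvalid m i).1, ?_,
    ⟨K, fusion_treeLe hT₀ hbin hvalid hdec ⟨n, hn⟩ hKU (fun x y => ?_) ⟨K, subset_rfl⟩⟩,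
    fun j => fusion_f_isSome_iff hdec hvalid⟩
  · refine Filter.mem_of_superset (Filter.inter_mem (hvalid i i).2.1 hZI) ?_
    rw [← compl_union]
    exact compl_subset_compl.2 (fusion_T_subset_union hdec)
  · exact ⟨fun ⟨h, hx, hy⟩ => ⟨(hKr x hx y hy).1 h, hx, hy⟩,
      fun ⟨h, hx, hy⟩ => ⟨(hKr x hx y hy).2 h, hx, hy⟩⟩

theorem fusion_le_res (hT₀ : IsTreeOn T₀ r₀) (hbin : IsFullBinaryTree T₀ r₀)
    (hvalid : ∀ n, (p n).valid F T₀ r₀) (hdec : ∀ n, (p (n + 1)).le (p n)) (hn : n ∈ Z) :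
    (fusion p Z).le ((p n).res n) := by
  intro i
  have hsub : ((p n).res n).T i ⊆ (fusion p Z).T i := fun x hx => mem_fusion_T.2 ⟨n, hn, hx⟩
  refine ⟨fusion_treeLe hT₀ hbin hvalid hdec ⟨n, hn⟩ hsub (fun x y => ?_)
    ((hvalid n).exists_treeCut_subset_res i n), fun j hj => ?_⟩
  · rw [(p n).res_r_iff (hvalid n i).1]
    constructor
    · rintro ⟨h, hx, hy⟩
      exact ⟨⟨⟨n, h⟩, hsub hx, hsub hy⟩, hx, hy⟩
    · rintro ⟨⟨h, -, -⟩, hx, hy⟩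
      exact ⟨(limRel_iff hdec (fun m => (hvalid m i).1) ((p n).res_T_subset hx)
        ((p n).res_T_subset hy)).1 h, hx, hy⟩
  · rw [(p n).res_f_of_mem hj, fusion_f_of_mem hdec hn hj]

end Fusion

end QCond

theorem fusion_lemma_general (F : Filter ℕ)
    (hfat : ∀ A : ℕ → Set ℕ, (∀ n, (A n)ᶜ ∈ F) →
      (∀ k : ℕ, {n : ℕ | (A n ∩ Set.Iic k).Nonempty}.Finite) →
      ∃ Z : Set ℕ, Z.Infinite ∧ (⋃ n ∈ Z, A n)ᶜ ∈ F)
    (T₀ : Set ℕ) (r₀ : ℕ → ℕ → Prop) (hT₀ : IsTreeOn T₀ r₀)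
    (hiso : ∃ g : ℕ → List Bool, Set.BijOn g T₀ Set.univ ∧
      ∀ i ∈ T₀, ∀ j ∈ T₀, (r₀ i j ↔ g i <+: g j))
    (p : ℕ → QCond) (hvalid : ∀ n, (p n).valid F T₀ r₀)
    (hdec : ∀ n : ℕ, (p (n + 1)).le (p n)) :
    ∃ q : QCond, q.valid F T₀ r₀ ∧
      ∃ Z : Set ℕ, Z.Infinite ∧ ∀ n ∈ Z, q.le ((p n).res n) := by
  obtain ⟨Z, hZ, hZI⟩ := hfat (fun n => (p n).headUnion n)
    (fun n => (hvalid n).compl_headUnion_mem n) (QCond.finite_setOf_headUnion_inter_Iic_nonempty p)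
  exact ⟨QCond.fusion p Z, QCond.fusion_valid hT₀ hiso hvalid hdec hZ.nonempty hZI, Z, hZ,
    fun n hn => QCond.fusion_le_res hT₀ hiso hvalid hdec hn⟩

/-- Lemma 2.1, fusion: assume the dual ideal `I = {A | Aᶜ ∈ F}` of
`F` has the P-property and is fat, and fix a tree `T₀ ∈ I` order-isomorphic to the
full binary tree of height `ω`.  Then for every decreasing sequence
`p 0 ≥ p 1 ≥ …` of conditions of `Q` there are a condition `q` and an infinite
`Z ⊆ ℕ` with `q ≤ (p n)⁽ⁿ⁾` for every `n ∈ Z`. -/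
theorem fusion_lemma (F : Filter ℕ)
    (hcof : Filter.cofinite ≤ F) (hbot : (∅ : Set ℕ) ∉ F)
    (hP : ∀ A : ℕ → Set ℕ, (∀ n, (A n)ᶜ ∈ F) →
      ∃ B : Set ℕ, Bᶜ ∈ F ∧ ∀ n, (A n \ B).Finite)
    (hfat : ∀ A : ℕ → Set ℕ, (∀ n, (A n)ᶜ ∈ F) →
      (∀ k : ℕ, {n : ℕ | (A n ∩ Set.Iic k).Nonempty}.Finite) →
      ∃ Z : Set ℕ, Z.Infinite ∧ (⋃ n ∈ Z, A n)ᶜ ∈ F)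
    (T₀ : Set ℕ) (r₀ : ℕ → ℕ → Prop) (hT₀ : IsTreeOn T₀ r₀) (hT₀I : T₀ᶜ ∈ F)
    (hiso : ∃ g : ℕ → List Bool, Set.BijOn g T₀ Set.univ ∧
      ∀ i ∈ T₀, ∀ j ∈ T₀, (r₀ i j ↔ g i <+: g j))
    (p : ℕ → QCond) (hvalid : ∀ n, (p n).valid F T₀ r₀)
    (hdec : ∀ n : ℕ, (p (n + 1)).le (p n)) :
    ∃ q : QCond, q.valid F T₀ r₀ ∧
      ∃ Z : Set ℕ, Z.Infinite ∧ ∀ n ∈ Z, q.le ((p n).res n) :=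
  fusion_lemma_general F hfat T₀ r₀ hT₀ hiso p hvalid hdec
end
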